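/- Removing the larger member of each twin prime pair from the set of primes leaves an infinite set: the set of primes p such that p - 2 is not prime is infinite. -/

import Mathlib

/-! Every prime `p ≡ 2 (mod 3)` other than `5` has `3 ∣ p - 2` with `p - 2 ≠ 3`, so `p - 2` is not
prime; by Dirichlet's theorem there are infinitely many such primes. -/

theorem Nat.not_prime_sub_two_of_modEq_two_mod_three {p : ℕ} (hp : p ≡ 2 [MOD 3]) (h5 : p ≠ 5) :
    ¬ (p - 2).Prime := by
  intro hprime
  have hdvd : 3 ∣ p - 2 := (Nat.modEq_iff_dvd' (by unfold Nat.ModEq at hp; omega)).mp hp.symm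
  have h3 : 3 = p - 2 := (Nat.prime_dvd_prime_iff_eq Nat.prime_three hprime).mp hdvd
  omega

theorem stmt_16 :
    {p : ℕ | p.Prime ∧ (p ≤ 2 ∨ ¬ (p - 2).Prime)}.Infinite := by
  have hDirichlet := (Nat.infinite_setOfPred_prime_and_modEq (q := 3) (a := 2) three_ne_zero
    (by norm_num)).sdiff (Set.finite_singleton 5)
  refine hDirichlet.mono ?_
  rintro p ⟨⟨hp, hmod⟩, h5⟩
  exact ⟨hp, Or.inr (Nat.not_prime_sub_two_of_modEq_two_mod_three hmod h5)⟩
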